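/- Under the hypotheses of the kernel perturbation estimate (|K_α(x,y) − K_α(x₀,y₀)| ≤ (1/2)|K_α(x₀,y₀)| for all x ∈ Q, y ∈ P, and |K_α(x₀,y₀)| ≥ a/|x₀−y₀|^{n−α} with |x₀−y₀| = |t| r √n), for any nonnegative f supported in Q and any y ∈ P, |∫_Q K_α(x,y) f(x) dx| ≥ (2^{n−α−1} a / (|t|√n)^{n−α}) |Q|^{α/n} avg_Q f. -/

import Mathlib

open MeasureTheory Finset

/-!
Since `|K(x,y) - K(x₀,y₀)| ≤ |K(x₀,y₀)|/2` on `Q × P`, the kernel `K(·,y)` stays within half of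
`K(x₀,y₀)`, so `|∫_Q K(x,y) f(x) dx| ≥ |K(x₀,y₀)|/2 · ∫_Q f`. The rest is bookkeeping:
`|x₀ - y₀| = |t| r √n`, and `|Q|^{α/n} avg_Q f = (2r)^{α-n} ∫_Q f` for `|Q| = (2r)ⁿ`.
-/

/-- The (closed) cube `Q(c,r)` with center `c`, radius `r` (side length `2r`),
sides parallel to the coordinate axes. -/
def cube {n : ℕ} (c : Fin n → ℝ) (r : ℝ) : Set (Fin n → ℝ) := {y | ∀ i, |y i - c i| ≤ r}

/-- The Euclidean norm on `Fin n → ℝ`. -/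
noncomputable def enorm2 {n : ℕ} (v : Fin n → ℝ) : ℝ := Real.sqrt (∑ i, v i ^ 2)

lemma abs_integral_mul_ge_of_abs_sub_le {α : Type*} [MeasurableSpace α] {μ : Measure α}
    {k g : α → ℝ} {c δ : ℝ} (hg : Integrable g μ) (hg0 : 0 ≤ᵐ[μ] g)
    (hk : AEStronglyMeasurable k μ) (hkc : ∀ᵐ x ∂μ, |k x - c| ≤ δ) :
    (|c| - δ) * ∫ x, g x ∂μ ≤ |∫ x, k x * g x ∂μ| := by
  have hkg : Integrable (fun x => k x * g x) μ := by
    refine hg.bdd_mul hk (c := |c| + δ) ?_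
    filter_upwards [hkc] with x hx
    rw [Real.norm_eq_abs]
    linarith [abs_sub_abs_le_abs_sub (k x) c]
  have herr : |∫ x, (k x - c) * g x ∂μ| ≤ δ * ∫ x, g x ∂μ := by
    rw [← integral_const_mul, ← Real.norm_eq_abs]
    refine norm_integral_le_of_norm_le (hg.const_mul δ) ?_
    filter_upwards [hkc, hg0] with x hx hgx
    rw [Real.norm_eq_abs, abs_mul, abs_of_nonneg hgx]
    exact mul_le_mul_of_nonneg_right hx hgx
  have hsplit : ∫ x, k x * g x ∂μ = c * ∫ x, g x ∂μ + ∫ x, (k x - c) * g x ∂μ := by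
    simp_rw [sub_mul]
    rw [integral_sub hkg (hg.const_mul c), integral_const_mul]
    ring
  calc (|c| - δ) * ∫ x, g x ∂μ
      ≤ |c * ∫ x, g x ∂μ| - |∫ x, (k x - c) * g x ∂μ| := by
        rw [abs_mul, abs_of_nonneg (integral_nonneg_of_ae hg0)]
        linarith
    _ ≤ |∫ x, k x * g x ∂μ| := hsplit ▸ abs_sub_abs_le_abs_add _ _

lemma cube_eq_Icc {n : ℕ} (c : Fin n → ℝ) (r : ℝ) :
    cube c r = Set.Icc (c - fun _ => r) (c + fun _ => r) := by
  ext y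
  simp only [cube, Set.mem_ofPred_eq, Set.mem_Icc, Pi.le_def, Pi.sub_apply, Pi.add_apply,
    abs_le, ← forall_and]
  exact forall_congr' fun i => by constructor <;> rintro ⟨h₁, h₂⟩ <;> constructor <;> linarith

lemma measurableSet_cube {n : ℕ} (c : Fin n → ℝ) (r : ℝ) : MeasurableSet (cube c r) := by
  rw [cube_eq_Icc]
  exact measurableSet_Icc

lemma volume_cube_toReal {n : ℕ} (c : Fin n → ℝ) {r : ℝ} (hr : 0 ≤ r) :
    (volume (cube c r)).toReal = (2 * r) ^ n := by
  rw [cube_eq_Icc, Real.volume_Icc_pi]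
  simp only [Pi.add_apply, Pi.sub_apply, add_sub_sub_cancel, ← two_mul, prod_const, card_univ,
    Fintype.card_fin, ENNReal.toReal_pow, ENNReal.toReal_ofReal (by positivity : 0 ≤ 2 * r)]

lemma volume_cube_rpow_mul_setAverage {n : ℕ} (hn : n ≠ 0) (c : Fin n → ℝ) {r : ℝ} (hr : 0 < r)
    (α : ℝ) (f : (Fin n → ℝ) → ℝ) :
    (volume (cube c r)).toReal ^ (α / n) * ⨍ x in cube c r, f x
      = (2 * r) ^ (α - n) * ∫ x in cube c r, f x := by
  have h2r : 0 < 2 * r := by positivity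
  rw [setAverage_eq, measureReal_def, volume_cube_toReal c hr.le, smul_eq_mul, ← mul_assoc,
    ← Real.rpow_natCast, ← Real.rpow_mul h2r.le, ← Real.rpow_neg h2r.le, ← Real.rpow_add h2r,
    mul_div_cancel₀ α (Nat.cast_ne_zero.mpr hn), ← sub_eq_add_neg]

lemma enorm2_smul {n : ℕ} (s : ℝ) (v : Fin n → ℝ) : enorm2 (s • v) = |s| * enorm2 v := by
  simp only [enorm2, Pi.smul_apply, smul_eq_mul, mul_pow, ← mul_sum]
  rw [Real.sqrt_mul (sq_nonneg s), Real.sqrt_sq_eq_abs]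

lemma enorm2_neg {n : ℕ} (v : Fin n → ℝ) : enorm2 (-v) = enorm2 v := by
  simp only [enorm2, Pi.neg_apply, neg_sq]

lemma two_rpow_sub_one_mul_div_rpow_mul_two_mul_rpow_neg {p T r : ℝ} (hT : 0 ≤ T) (hr : 0 < r)
    (a : ℝ) :
    2 ^ (p - 1) * a / T ^ p * (2 * r) ^ (-p) = a / (T * r) ^ p / 2 := by
  rw [Real.mul_rpow (by norm_num) hr.le, Real.mul_rpow hT hr.le, Real.rpow_neg hr.le,
    Real.rpow_neg zero_le_two, Real.rpow_sub_one two_ne_zero]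
  have : (2 : ℝ) ^ p ≠ 0 := (Real.rpow_pos_of_pos two_pos p).ne'
  field_simp

theorem stmt15_general {n : ℕ} (hn : 0 < n) (α a t r : ℝ)
    (hr : 0 < r)
    (u₁ : Fin n → ℝ) (hu : ∑ i, u₁ i ^ 2 = 1)
    (K : (Fin n → ℝ) → (Fin n → ℝ) → ℝ)
    (hKmeas : ∀ y, Measurable fun x => K x y)
    (x₀ y₀ : Fin n → ℝ)
    (hpair : y₀ = x₀ + (t * r * Real.sqrt n) • u₁)
    (hpert : ∀ x ∈ cube x₀ r, ∀ y ∈ cube y₀ r,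
      |K x y - K x₀ y₀| ≤ (1 / 2) * |K x₀ y₀|)
    (hnd : a / enorm2 (x₀ - y₀) ^ ((n : ℝ) - α) ≤ |K x₀ y₀|)
    (f : (Fin n → ℝ) → ℝ) (hf0 : ∀ x, 0 ≤ f x)
    (hfi : IntegrableOn f (cube x₀ r) volume)
    (y : Fin n → ℝ) (hy : y ∈ cube y₀ r) :
    2 ^ ((n : ℝ) - α - 1) * a / ((|t| * Real.sqrt n) ^ ((n : ℝ) - α))
        * (volume (cube x₀ r)).toReal ^ (α / n)
        * ⨍ x in cube x₀ r, f x ∂volume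
      ≤ |∫ x in cube x₀ r, K x y * f x ∂volume| := by
  have hQ := measurableSet_cube x₀ r
  have hdist : enorm2 (x₀ - y₀) = |t| * Real.sqrt n * r := by
    have hu₁ : enorm2 u₁ = 1 := by rw [enorm2, hu, Real.sqrt_one]
    rw [hpair, sub_add_cancel_left, enorm2_neg, enorm2_smul, hu₁, abs_mul, abs_mul,
      abs_of_pos hr, abs_of_nonneg (Real.sqrt_nonneg _)]
    ring
  have hhalf := abs_integral_mul_ge_of_abs_sub_le hfi
    (ae_restrict_of_forall_mem hQ fun x _ => hf0 x) (hKmeas y).aestronglyMeasurable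
    (ae_restrict_of_forall_mem hQ fun x hx => hpert x hx y hy)
  rw [mul_assoc, volume_cube_rpow_mul_setAverage hn.ne' x₀ hr, ← mul_assoc,
    show α - n = -(n - α) by ring,
    two_rpow_sub_one_mul_div_rpow_mul_two_mul_rpow_neg (by positivity) hr]
  rw [hdist] at hnd
  calc a / (|t| * Real.sqrt n * r) ^ ((n : ℝ) - α) / 2 * ∫ x in cube x₀ r, f x
      ≤ (|K x₀ y₀| - 1 / 2 * |K x₀ y₀|) * ∫ x in cube x₀ r, f x := by
        gcongr
        · exact setIntegral_nonneg hQ fun x _ => hf0 x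
        · linarith
    _ ≤ _ := hhalf

/-- Under the kernel perturbation estimate
(`|K_α(x,y) − K_α(x₀,y₀)| ≤ ½|K_α(x₀,y₀)|` for all `x ∈ Q`, `y ∈ P`) and the
non-degeneracy `|K_α(x₀,y₀)| ≥ a/|x₀−y₀|^{n−α}` with `|x₀−y₀| = |t| r √n`
(`Q = Q(x₀,r)` and `P = Q(y₀,r)` a `(t,u₁)` pair), for any nonnegative `f` supported
in `Q` and any `y ∈ P`,
`|∫_Q K_α(x,y) f(x) dx| ≥ (2^{n−α−1} a / (|t|√n)^{n−α}) |Q|^{α/n} avg_Q f`. -/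
theorem stmt15 {n : ℕ} (hn : 0 < n) (α a t r : ℝ)
    (h0 : 0 ≤ α) (hα : α < n) (ha : 0 < a) (hr : 0 < r) (ht : t ≠ 0)
    (u₁ : Fin n → ℝ) (hu : ∑ i, u₁ i ^ 2 = 1)
    (K : (Fin n → ℝ) → (Fin n → ℝ) → ℝ)
    (hKmeas : ∀ y, Measurable fun x => K x y)
    (x₀ y₀ : Fin n → ℝ)
    (hpair : y₀ = x₀ + (t * r * Real.sqrt n) • u₁)
    (hpert : ∀ x ∈ cube x₀ r, ∀ y ∈ cube y₀ r,
      |K x y - K x₀ y₀| ≤ (1 / 2) * |K x₀ y₀|)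
    (hnd : a / enorm2 (x₀ - y₀) ^ ((n : ℝ) - α) ≤ |K x₀ y₀|)
    (f : (Fin n → ℝ) → ℝ) (hf0 : ∀ x, 0 ≤ f x)
    (hsupp : ∀ x ∉ cube x₀ r, f x = 0)
    (hfi : IntegrableOn f (cube x₀ r) volume)
    (y : Fin n → ℝ) (hy : y ∈ cube y₀ r) :
    2 ^ ((n : ℝ) - α - 1) * a / ((|t| * Real.sqrt n) ^ ((n : ℝ) - α))
        * (volume (cube x₀ r)).toReal ^ (α / n)
        * ⨍ x in cube x₀ r, f x ∂volume
      ≤ |∫ x in cube x₀ r, K x y * f x ∂volume| :=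
  stmt15_general hn α a t r hr u₁ hu K hKmeas x₀ y₀ hpair hpert hnd f hf0 hfi y hy
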